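/- arXiv:2301.05678 — 2 statements merged into one kernel-verified Lean document; each statement's English description precedes it below -/
import Mathlib

section
/- Let t ≥ 2 and let G be a graph with m edges. For each t-clique T of G define θ_G(T) = max{ d_G(v) : v ∈ T } and s^2_G(T) = 1 / C(θ_G(T) - 1, t-2). Then the sum of s^2_G(T) over all t-cliques T of G is at most m / C(t, 2). Moreover, when t ≥ 3 equality holds if and only if G is a disjoint union of complete graphs of order at least t together with any number of isolated vertices. -/
/-!
Double count over the darts `(u, v)` of `G`. The `t`-cliques through `u` and `v` inject, by deleting
`u` and `v`, into the `(t - 2)`-subsets of `N(u) \ {v}`, and each has weight at most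
`1 / C(d(u) - 1, t - 2)`, so they contribute at most `1`; every `t`-clique is met by
`t (t - 1) = 2 C(t, 2)` of the `2m` darts.

Equality forces every dart to contribute exactly `1`, so every `(t - 2)`-subset of `N(u) \ {v}`
completes `u, v` to a clique. For `t ≥ 3` every neighbour of `u` lies in such a subset, so
neighbourhoods are cliques and components are complete; a clique through `u` makes its component
of order at least `t`. Conversely, in a disjoint union of complete graphs of order at least `t`
all vertices of a clique have the same degree and all the subsets above complete to cliques.
-/

open Finset

namespace SimpleGraph

section Reachable

variable {V : Type*} {G : SimpleGraph V} {u v w : V}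

lemma Reachable.adj_of_ne (hN : ∀ a, G.IsClique (G.neighborSet a)) (h : G.Reachable v w)
    (hvw : v ≠ w) : G.Adj v w := by
  obtain ⟨p⟩ := h
  induction p with
  | nil => exact absurd rfl hvw
  | @cons a x w hax _ ih =>
    rcases eq_or_ne x w with rfl | hxw
    · exact hax
    · exact hN x hax.symm (ih hxw) hvw

lemma isClique_of_forall_reachable (hcomp : ∀ v w : V, G.Reachable v w → v ≠ w → G.Adj v w)
    {s : Set V} (hs : ∀ x ∈ s, G.Reachable u x) : G.IsClique s :=
  fun x hx y hy hxy => hcomp x y ((hs x hx).symm.trans (hs y hy)) hxy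

end Reachable

lemma card_edgeFinset_div_eq_card_dart_div {V : Type*} [Fintype V] (G : SimpleGraph V)
    [DecidableRel G.Adj] (n : ℕ) :
    (#G.edgeFinset : ℝ) / n = Fintype.card G.Dart / (2 * n) := by
  rw [dart_card_eq_twice_card_edges, Nat.cast_mul, Nat.cast_ofNat,
    mul_div_mul_left _ _ two_ne_zero]

variable {V : Type*} [Fintype V] [DecidableEq V] (G : SimpleGraph V) [DecidableRel G.Adj]

/-- The weight `s²(T)` of a `t`-clique `T`, with `t = k + 2`. -/
noncomputable def cliqueWeight (k : ℕ) (T : Finset V) : ℝ :=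
  1 / ((T.sup (G.degree ·) - 1).choose k : ℝ)

def cliquesThrough (k : ℕ) (u v : V) : Finset (Finset V) :=
  {T ∈ G.cliqueFinset (k + 2) | u ∈ T ∧ v ∈ T}

variable {G} {k : ℕ} {u v w : V} {T : Finset V}

lemma mem_cliquesThrough :
    T ∈ G.cliquesThrough k u v ↔ G.IsNClique (k + 2) T ∧ u ∈ T ∧ v ∈ T := by
  simp [cliquesThrough]

lemma IsClique.erase_subset_neighborFinset (hT : G.IsClique (T : Set V)) (hu : u ∈ T) :
    T.erase u ⊆ G.neighborFinset u := fun x hx => by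
  rw [mem_erase] at hx
  exact (G.mem_neighborFinset u x).2 (hT hu hx.2 (Ne.symm hx.1))

lemma IsNClique.le_degree {n : ℕ} (hT : G.IsNClique (n + 1) T) (hu : u ∈ T) :
    n ≤ G.degree u := by
  simpa [card_erase_of_mem hu, hT.card_eq] using
    card_le_card (hT.isClique.erase_subset_neighborFinset hu)

lemma card_neighborFinset_erase (huv : G.Adj u v) :
    #((G.neighborFinset u).erase v) = G.degree u - 1 := by
  rw [card_erase_of_mem ((G.mem_neighborFinset u v).2 huv), card_neighborFinset_eq_degree]

lemma IsClique.card_filter_dart (hT : G.IsClique (T : Set V)) :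
    #({d : G.Dart | d.fst ∈ T ∧ d.snd ∈ T} : Finset G.Dart) = #T.offDiag := by
  refine card_bij (fun d _ => d.toProd) (fun d hd => ?_) (fun d₁ _ d₂ _ h => Dart.ext _ _ h)
    (fun p hp => ?_)
  · simp only [mem_filter, mem_univ, true_and] at hd
    exact mem_offDiag.2 ⟨hd.1, hd.2, d.fst_ne_snd⟩
  · obtain ⟨h₁, h₂, hne⟩ := mem_offDiag.1 hp
    exact ⟨⟨p, hT h₁ h₂ hne⟩, by simp [h₁, h₂], rfl⟩

lemma sum_dart_sum_cliquesThrough {M : Type*} [AddCommMonoid M] (k : ℕ) (f : Finset V → M) :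
    ∑ d : G.Dart, ∑ T ∈ G.cliquesThrough k d.fst d.snd, f T =
      ((k + 2) * (k + 1)) • ∑ T ∈ G.cliqueFinset (k + 2), f T := by
  rw [sum_comm' (t' := G.cliqueFinset (k + 2))
    (s' := fun T => ({d : G.Dart | d.fst ∈ T ∧ d.snd ∈ T} : Finset G.Dart))
    (by simp [mem_cliquesThrough, and_comm]), smul_sum]
  refine sum_congr rfl fun T hT => ?_
  have hT := mem_cliqueFinset_iff.1 hT
  rw [sum_const, hT.isClique.card_filter_dart, offDiag_card, hT.card_eq,
    show (k + 2) * (k + 2) - (k + 2) = (k + 2) * (k + 1) from Nat.sub_eq_of_eq_add (by ring)]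

lemma cliqueWeight_le (hT : G.IsNClique (k + 2) T) (hu : u ∈ T) :
    G.cliqueWeight k T ≤ 1 / ((G.degree u - 1).choose k : ℝ) := by
  have hk : k ≤ G.degree u - 1 := by have := hT.le_degree hu; omega
  have hsup : G.degree u - 1 ≤ T.sup (G.degree ·) - 1 :=
    Nat.sub_le_sub_right (le_sup (f := (G.degree ·)) hu) 1
  unfold cliqueWeight
  gcongr
  exact_mod_cast Nat.choose_pos hk

lemma sdiff_pair_mem_powersetCard (huv : u ≠ v) (hT : T ∈ G.cliquesThrough k u v) :
    T \ {u, v} ∈ powersetCard k ((G.neighborFinset u).erase v) := by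
  obtain ⟨hT, hu, hv⟩ := mem_cliquesThrough.1 hT
  refine mem_powersetCard.2 ⟨fun x hx => ?_, ?_⟩
  · simp only [mem_sdiff, mem_insert, mem_singleton, not_or] at hx
    exact mem_erase.2
      ⟨hx.2.2, hT.isClique.erase_subset_neighborFinset hu (mem_erase.2 ⟨hx.2.1, hx.1⟩)⟩
  · rw [card_sdiff_of_subset (insert_subset hu (singleton_subset_iff.2 hv)), hT.card_eq,
      card_pair huv, Nat.add_sub_cancel]

lemma injOn_sdiff_pair (G : SimpleGraph V) [DecidableRel G.Adj] (k : ℕ) (u v : V) :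
    Set.InjOn (fun T : Finset V => T \ {u, v}) (G.cliquesThrough k u v) := by
  intro T₁ h₁ T₂ h₂ h
  obtain ⟨-, hu₁, hv₁⟩ := mem_cliquesThrough.1 h₁
  obtain ⟨-, hu₂, hv₂⟩ := mem_cliquesThrough.1 h₂
  rw [← sdiff_union_of_subset (insert_subset hu₁ (singleton_subset_iff.2 hv₁)),
    ← sdiff_union_of_subset (insert_subset hu₂ (singleton_subset_iff.2 hv₂))]
  exact congrArg (· ∪ {u, v}) h

lemma card_cliquesThrough_le (huv : G.Adj u v) :
    #(G.cliquesThrough k u v) ≤ (G.degree u - 1).choose k := by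
  rw [← card_neighborFinset_erase huv, ← card_powersetCard]
  exact card_le_card_of_injOn _ (fun T hT => sdiff_pair_mem_powersetCard huv.ne hT)
    (injOn_sdiff_pair G k u v)

lemma sum_cliquesThrough_le_card_div :
    ∑ T ∈ G.cliquesThrough k u v, G.cliqueWeight k T ≤
      #(G.cliquesThrough k u v) / ((G.degree u - 1).choose k : ℝ) := by
  rw [div_eq_mul_one_div, ← nsmul_eq_mul, ← sum_const]
  refine sum_le_sum fun T hT => ?_
  obtain ⟨hT, hu, -⟩ := mem_cliquesThrough.1 hT
  exact cliqueWeight_le hT hu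

lemma sum_cliquesThrough_le_one (huv : G.Adj u v) :
    ∑ T ∈ G.cliquesThrough k u v, G.cliqueWeight k T ≤ 1 :=
  sum_cliquesThrough_le_card_div.trans
    (div_le_one_of_le₀ (by exact_mod_cast card_cliquesThrough_le huv) (by positivity))

lemma sum_cliqueWeight_eq_sum_dart_div (k : ℕ) :
    ∑ T ∈ G.cliqueFinset (k + 2), G.cliqueWeight k T =
      (∑ d : G.Dart, ∑ T ∈ G.cliquesThrough k d.fst d.snd, G.cliqueWeight k T) /
        (2 * (k + 2).choose 2) := by
  have h : (2 * (k + 2).choose 2 : ℝ) = ((k + 2) * (k + 1) : ℕ) := by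
    rw [Nat.cast_choose_two]; push_cast; ring
  rw [sum_dart_sum_cliquesThrough, nsmul_eq_mul, h, mul_div_cancel_left₀ _ (by positivity)]

lemma sum_cliqueWeight_le (k : ℕ) :
    ∑ T ∈ G.cliqueFinset (k + 2), G.cliqueWeight k T ≤ #G.edgeFinset / (k + 2).choose 2 := by
  rw [sum_cliqueWeight_eq_sum_dart_div, card_edgeFinset_div_eq_card_dart_div]
  gcongr
  simpa using sum_le_card_nsmul univ _ 1 fun d _ => sum_cliquesThrough_le_one d.adj

lemma sum_cliqueWeight_eq_iff (k : ℕ) :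
    ∑ T ∈ G.cliqueFinset (k + 2), G.cliqueWeight k T = #G.edgeFinset / (k + 2).choose 2 ↔
      ∀ u v, G.Adj u v → ∑ T ∈ G.cliquesThrough k u v, G.cliqueWeight k T = 1 := by
  have hpos : (0 : ℝ) < 2 * (k + 2).choose 2 := by
    have := Nat.choose_pos (n := k + 2) (k := 2) (by omega); positivity
  rw [sum_cliqueWeight_eq_sum_dart_div, card_edgeFinset_div_eq_card_dart_div,
    div_left_inj' hpos.ne', Fintype.card_eq_sum_ones, Nat.cast_sum, Nat.cast_one,
    sum_eq_sum_iff_of_le fun d _ => sum_cliquesThrough_le_one d.adj]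
  exact ⟨fun h u v huv => h ⟨(u, v), huv⟩ (mem_univ _), fun h d _ => h _ _ d.adj⟩

lemma card_cliquesThrough_eq_of_sum_eq_one (huv : G.Adj u v)
    (h : ∑ T ∈ G.cliquesThrough k u v, G.cliqueWeight k T = 1) :
    #(G.cliquesThrough k u v) = (G.degree u - 1).choose k := by
  refine (card_cliquesThrough_le huv).antisymm (not_lt.1 fun hlt => ?_)
  have hpos : (0 : ℝ) < (G.degree u - 1).choose k := by
    exact_mod_cast (Nat.zero_le _).trans_lt hlt
  have : (#(G.cliquesThrough k u v) : ℝ) / (G.degree u - 1).choose k < 1 :=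
    (div_lt_one hpos).2 (by exact_mod_cast hlt)
  linarith [sum_cliquesThrough_le_card_div (G := G) (k := k) (u := u) (v := v)]

lemma image_sdiff_pair_eq_of_sum_eq_one (huv : G.Adj u v)
    (h : ∑ T ∈ G.cliquesThrough k u v, G.cliqueWeight k T = 1) :
    (G.cliquesThrough k u v).image (· \ {u, v}) =
      powersetCard k ((G.neighborFinset u).erase v) := by
  refine eq_of_subset_of_card_le (fun S hS => ?_) ?_
  · obtain ⟨T, hT, rfl⟩ := mem_image.1 hS
    exact sdiff_pair_mem_powersetCard huv.ne hT
  · rw [card_image_of_injOn (injOn_sdiff_pair G k u v),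
      card_cliquesThrough_eq_of_sum_eq_one huv h, card_powersetCard, card_neighborFinset_erase huv]

lemma adj_of_sum_cliquesThrough_eq_one (hk : k ≠ 0) (huv : G.Adj u v) (huw : G.Adj u w)
    (hvw : v ≠ w) (h : ∑ T ∈ G.cliquesThrough k u v, G.cliqueWeight k T = 1) : G.Adj v w := by
  obtain ⟨T, hT, -⟩ := exists_ne_zero_of_sum_ne_zero (h.symm ▸ one_ne_zero)
  have hdeg := (mem_cliquesThrough.1 hT).1.le_degree (mem_cliquesThrough.1 hT).2.1
  have hw : w ∈ (G.neighborFinset u).erase v :=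
    mem_erase.2 ⟨hvw.symm, (G.mem_neighborFinset u w).2 huw⟩
  obtain ⟨S, hwS, hS, hScard⟩ := exists_subsuperset_card_eq (singleton_subset_iff.2 hw)
    (by simpa [Nat.one_le_iff_ne_zero] using hk) (by rw [card_neighborFinset_erase huv]; omega)
  obtain ⟨T, hT, hTS⟩ := mem_image.1
    (image_sdiff_pair_eq_of_sum_eq_one huv h ▸ mem_powersetCard.2 ⟨hS, hScard⟩)
  obtain ⟨hT, -, hv⟩ := mem_cliquesThrough.1 hT
  have hwT : w ∈ T := (mem_sdiff.1 (hTS ▸ singleton_subset_iff.1 hwS)).1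
  exact hT.isClique hv hwT hvw

lemma card_reachable_eq_degree_add_one
    (hcomp : ∀ v w : V, G.Reachable v w → v ≠ w → G.Adj v w) (v : V) :
    Nat.card {w | G.Reachable v w} = G.degree v + 1 := by
  have hN : G.neighborFinset v = ({w | G.Reachable v w} : Finset V).erase v := by
    ext w
    simp only [mem_neighborFinset, mem_erase, mem_filter, mem_univ, true_and]
    exact ⟨fun h => ⟨h.ne', h.reachable⟩, fun h => hcomp v w h.2 h.1.symm⟩
  rw [← card_neighborFinset_eq_degree, hN, card_erase_add_one (by simp),
    Nat.card_eq_fintype_card, ← Fintype.card_subtype]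
  rfl

lemma degree_eq_of_reachable (hcomp : ∀ v w : V, G.Reachable v w → v ≠ w → G.Adj v w)
    (h : G.Reachable v w) : G.degree v = G.degree w := by
  have hv := card_reachable_eq_degree_add_one hcomp v
  rw [show {x | G.Reachable v x} = {x | G.Reachable w x} from
    Set.ext fun x => ⟨h.symm.trans, h.trans⟩, card_reachable_eq_degree_add_one hcomp w] at hv
  omega

lemma cliqueWeight_eq_of_forall_reachable_adj
    (hcomp : ∀ v w : V, G.Reachable v w → v ≠ w → G.Adj v w) (hT : G.IsClique (T : Set V))
    (hu : u ∈ T) : G.cliqueWeight k T = 1 / ((G.degree u - 1).choose k : ℝ) := by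
  have hsup : T.sup (G.degree ·) = G.degree u := by
    refine le_antisymm (Finset.sup_le fun x hx => ?_) (le_sup (f := (G.degree ·)) hu)
    rcases eq_or_ne u x with rfl | hux
    · rfl
    · exact (degree_eq_of_reachable hcomp (hT hu hx hux).reachable).ge
  rw [cliqueWeight, hsup]

lemma powersetCard_subset_image_sdiff_pair
    (hcomp : ∀ v w : V, G.Reachable v w → v ≠ w → G.Adj v w) (huv : G.Adj u v) :
    powersetCard k ((G.neighborFinset u).erase v) ⊆
      (G.cliquesThrough k u v).image (· \ {u, v}) := by
  intro S hS
  obtain ⟨hSN, hScard⟩ := mem_powersetCard.1 hS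
  have hdisj : Disjoint S {u, v} := by
    simp only [disjoint_insert_right, disjoint_singleton_right]
    exact ⟨fun hu => by simpa using (mem_erase.1 (hSN hu)).2,
      fun hv => (mem_erase.1 (hSN hv)).1 rfl⟩
  have hreach : ∀ x ∈ (↑(S ∪ {u, v}) : Set V), G.Reachable u x := by
    intro x hx
    simp only [coe_union, Set.mem_union, mem_coe, coe_insert, coe_singleton,
      Set.mem_insert_iff, Set.mem_singleton_iff] at hx
    rcases hx with hx | rfl | rfl
    · exact ((G.mem_neighborFinset u x).1 (mem_erase.1 (hSN hx)).2).reachable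
    · rfl
    · exact huv.reachable
  refine mem_image.2 ⟨S ∪ {u, v}, mem_cliquesThrough.2 ⟨⟨isClique_of_forall_reachable hcomp
    hreach, ?_⟩, by simp, by simp⟩, union_sdiff_cancel_right hdisj⟩
  rw [card_union_of_disjoint hdisj, hScard, card_pair huv.ne]

lemma sum_cliquesThrough_eq_one (hcomp : ∀ v w : V, G.Reachable v w → v ≠ w → G.Adj v w)
    (huv : G.Adj u v) (hdeg : k + 1 ≤ G.degree u) :
    ∑ T ∈ G.cliquesThrough k u v, G.cliqueWeight k T = 1 := by
  have hcard : #(G.cliquesThrough k u v) = (G.degree u - 1).choose k := by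
    refine (card_cliquesThrough_le huv).antisymm ?_
    calc (G.degree u - 1).choose k = #(powersetCard k ((G.neighborFinset u).erase v)) := by
          rw [card_powersetCard, card_neighborFinset_erase huv]
      _ ≤ #((G.cliquesThrough k u v).image (· \ {u, v})) :=
          card_le_card (powersetCard_subset_image_sdiff_pair hcomp huv)
      _ ≤ #(G.cliquesThrough k u v) := card_image_le
  have hpos : ((G.degree u - 1).choose k : ℝ) ≠ 0 := by
    exact_mod_cast (Nat.choose_pos (by omega)).ne'
  rw [sum_congr rfl fun T hT => cliqueWeight_eq_of_forall_reachable_adj hcomp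
      (mem_cliquesThrough.1 hT).1.isClique (mem_cliquesThrough.1 hT).2.1,
    sum_const, hcard, nsmul_eq_mul, mul_one_div_cancel hpos]

lemma forall_adj_sum_cliquesThrough_eq_one_iff (hk : k ≠ 0) :
    (∀ u v, G.Adj u v → ∑ T ∈ G.cliquesThrough k u v, G.cliqueWeight k T = 1) ↔
      (∀ v w, G.Reachable v w → v ≠ w → G.Adj v w) ∧
        ∀ v, 0 < G.degree v → k + 1 ≤ G.degree v := by
  constructor
  · intro h
    refine ⟨fun v w => Reachable.adj_of_ne fun a b hb c hc hbc =>
      adj_of_sum_cliquesThrough_eq_one hk hb hc hbc (h a b hb), fun v hv => ?_⟩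
    obtain ⟨u, hu⟩ := (G.degree_pos_iff_exists_adj v).1 hv
    obtain ⟨T, hT, -⟩ := exists_ne_zero_of_sum_ne_zero ((h v u hu).symm ▸ one_ne_zero)
    exact (mem_cliquesThrough.1 hT).1.le_degree (mem_cliquesThrough.1 hT).2.1
  · rintro ⟨hcomp, hdeg⟩ u v huv
    exact sum_cliquesThrough_eq_one hcomp huv
      (hdeg u ((G.degree_pos_iff_exists_adj u).2 ⟨v, huv⟩))

end SimpleGraph

theorem stmt_14 {V : Type*} [Fintype V] [DecidableEq V]
    (G : SimpleGraph V) [DecidableRel G.Adj]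
    (t m : ℕ) (ht : 2 ≤ t) (hm : G.edgeFinset.card = m)
    (θ : Finset V → ℕ) (hθ : ∀ T : Finset V, θ T = T.sup (fun v => G.degree v)) :
    ∑ T ∈ G.cliqueFinset t, (1 : ℝ) / ((θ T - 1).choose (t - 2) : ℝ) ≤
      (m : ℝ) / (t.choose 2 : ℝ) ∧
    (3 ≤ t →
      (∑ T ∈ G.cliqueFinset t, (1 : ℝ) / ((θ T - 1).choose (t - 2) : ℝ) =
          (m : ℝ) / (t.choose 2 : ℝ) ↔
        (∀ v w : V, G.Reachable v w → v ≠ w → G.Adj v w) ∧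
          ∀ v : V, 0 < G.degree v → t ≤ Nat.card {w : V | G.Reachable v w})) := by
  subst hm
  obtain ⟨k, rfl⟩ : ∃ k, t = k + 2 := ⟨t - 2, by omega⟩
  have hweight : ∀ T, (1 : ℝ) / ((θ T - 1).choose (k + 2 - 2) : ℝ) = G.cliqueWeight k T :=
    fun T => by rw [hθ, Nat.add_sub_cancel]; rfl
  simp only [hweight]
  refine ⟨G.sum_cliqueWeight_le k, fun ht3 => ?_⟩
  rw [G.sum_cliqueWeight_eq_iff k, G.forall_adj_sum_cliquesThrough_eq_one_iff (by omega)]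
  refine and_congr_right fun hcomp => forall_congr' fun v => imp_congr_right fun _ => ?_
  rw [G.card_reachable_eq_degree_add_one hcomp]
  omega
end

section
/- Let H be a graph on t vertices with dom(H) ≥ 1, let r ≥ 1, and let G be an S_r-free graph on n vertices (equivalently, Δ(G) ≤ r-1). Then dom(H) · N(H, G) ≤ n · C(r-1, t-1) · N(H↓1, K_{t-1}). -/
/-- `N(H, G)`: the number of subgraphs of `G` isomorphic to `H`. -/
noncomputable def copyCount {α β : Type*} (H : SimpleGraph α) (G : SimpleGraph β) : ℕ :=
  Nat.card {T : G.Subgraph // Nonempty (T.coe ≃g H)}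

/-- A dominating vertex of a graph: one adjacent to every other vertex. -/
def IsDomVert {α : Type*} (H : SimpleGraph α) (v : α) : Prop :=
  ∀ w : α, w ≠ v → H.Adj v w

/-!
Double counting. A pair (dominating vertex `w` of `H`, copy `T` of `H` in `G`) is determined by
the image `v` of `w` in `T` together with `T - v`: the vertex `v` is dominating in `T`, so `T` is
`T - v` plus the star from `v`. Moreover `T - v` is a copy of `H - w ≅ H - v₀` (swapping two
dominating vertices is an automorphism of `H`) whose `t - 1` vertices are neighbours of `v`.
Every degree of an `S_r`-free graph is below `r`, so there are at most `n · C(r-1, t-1)` choices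
for `v` and the vertex set of `T - v`, and at most `N(H - v₀, K_{t-1})` copies on a fixed
vertex set.
-/

namespace IsDomVert

variable {V W : Type*} {G : SimpleGraph V} {H : SimpleGraph W}

theorem of_iso (φ : G ≃g H) {x : V} (h : IsDomVert H (φ x)) : IsDomVert G x := fun _ hy ↦
  φ.map_adj_iff.1 (h _ (φ.injective.ne hy))

theorem adj_swap [DecidableEq W] {v w : W} (hv : IsDomVert H v) (hw : IsDomVert H w)
    {a b : W} (hab : H.Adj a b) : H.Adj (Equiv.swap v w a) (Equiv.swap v w b) := by
  have hne : Equiv.swap v w a ≠ Equiv.swap v w b := (Equiv.swap v w).injective.ne hab.ne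
  have dom_swap : ∀ c, c = v ∨ c = w → IsDomVert H (Equiv.swap v w c) := by
    rintro c (rfl | rfl)
    · rwa [Equiv.swap_apply_left]
    · rwa [Equiv.swap_apply_right]
  by_cases ha : a = v ∨ a = w
  · exact dom_swap a ha _ hne.symm
  by_cases hb : b = v ∨ b = w
  · exact (dom_swap b hb _ hne).symm
  rw [not_or] at ha hb
  rwa [Equiv.swap_apply_of_ne_of_ne ha.1 ha.2, Equiv.swap_apply_of_ne_of_ne hb.1 hb.2]

def swapIso [DecidableEq W] {v w : W} (hv : IsDomVert H v) (hw : IsDomVert H w) : H ≃g H where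
  toEquiv := Equiv.swap v w
  map_rel_iff' {a b} := ⟨fun h ↦ by simpa using hv.adj_swap hw h, hv.adj_swap hw⟩

theorem exists_iso_apply_eq (φ : G ≃g H) {x : V} {v₀ : W} (hx : IsDomVert H (φ x))
    (hv₀ : IsDomVert H v₀) : ∃ ψ : G ≃g H, ψ x = v₀ := by
  classical
  exact ⟨(hx.swapIso hv₀).comp φ, Equiv.swap_apply_left _ _⟩

end IsDomVert

namespace SimpleGraph

variable {V : Type*} {G : SimpleGraph V}

theorem isContained_star_of_le_degree {v : V} [Fintype (G.neighborSet v)] {r : ℕ}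
    (hr : r ≤ G.degree v) : completeBipartiteGraph (Fin 1) (Fin r) ⊑ G := by
  let leaf : Fin r ↪ G.neighborSet v :=
    (Fin.castLEEmb (by rwa [card_neighborSet_eq_degree])).trans
      (Fintype.equivFin _).symm.toEmbedding
  let f : Fin 1 ⊕ Fin r → V := Sum.elim (fun _ ↦ v) (fun i ↦ leaf i)
  have hf : Function.Injective f := by
    rintro (i | i) (j | j) h
    · exact congrArg Sum.inl (Subsingleton.elim i j)
    · exact absurd h (G.ne_of_adj (leaf j).2)
    · exact absurd h.symm (G.ne_of_adj (leaf i).2)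
    · exact congrArg Sum.inr (leaf.injective (Subtype.ext h))
  refine ⟨⟨⟨f, ?_⟩, hf⟩⟩
  rintro (i | i) (j | j) h
  · simp at h
  · exact (leaf j).2
  · exact ((leaf i).2 : G.Adj v _).symm
  · simp at h

theorem degree_lt_of_isEmpty_iso_star [Fintype V] [DecidableRel G.Adj] {r : ℕ}
    (hfree : ∀ S : G.Subgraph, IsEmpty (S.coe ≃g completeBipartiteGraph (Fin 1) (Fin r)))
    (v : V) : G.degree v < r := by
  by_contra! hr
  obtain ⟨S, ⟨e⟩⟩ := (isContained_star_of_le_degree hr).exists_iso_subgraph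
  exact (hfree S).false e.symm

end SimpleGraph

namespace SimpleGraph.Subgraph

variable {V W : Type*} {G : SimpleGraph V} {H : SimpleGraph W}

def deleteVertsSingletonIso (T : G.Subgraph) {v : V} (hv : v ∈ T.verts) (ψ : T.coe ≃g H) :
    (T.deleteVerts {v}).coe ≃g H.induce {ψ ⟨v, hv⟩}ᶜ :=
  (ψ.induce (ψ.toEquiv.bijOn fun x ↦ by simp [Subtype.ext_iff])).comp (T.coeDeleteVertsIso {v})

theorem nonempty_deleteVerts_iso (T : G.Subgraph) {v : V} (hv : v ∈ T.verts) (φ : T.coe ≃g H)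
    (hdom : IsDomVert H (φ ⟨v, hv⟩)) {v₀ : W} (hv₀ : IsDomVert H v₀) :
    Nonempty ((T.deleteVerts {v}).coe ≃g H.induce {v₀}ᶜ) := by
  obtain ⟨ψ, rfl⟩ := hdom.exists_iso_apply_eq φ hv₀
  exact ⟨T.deleteVertsSingletonIso hv ψ⟩

theorem adj_iff_of_adj_forall (T : G.Subgraph) {v : V}
    (hdom : ∀ x ∈ T.verts, x ≠ v → T.Adj v x) {x y : V} :
    T.Adj x y ↔ (T.deleteVerts {v}).Adj x y ∨ (x = v ∧ y ∈ (T.deleteVerts {v}).verts) ∨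
      (y = v ∧ x ∈ (T.deleteVerts {v}).verts) := by
  simp only [deleteVerts_adj, deleteVerts_verts, Set.mem_sdiff, Set.mem_singleton_iff]
  constructor
  · intro h
    have hx := T.edge_vert h
    have hy := T.edge_vert h.symm
    by_cases hxv : x = v
    · exact Or.inr (Or.inl ⟨hxv, hy, hxv ▸ h.ne.symm⟩)
    by_cases hyv : y = v
    · exact Or.inr (Or.inr ⟨hyv, hx, hyv ▸ h.ne⟩)
    exact Or.inl ⟨hx, hxv, hy, hyv, h⟩
  · rintro (⟨-, -, -, -, h⟩ | ⟨rfl, hy, hyx⟩ | ⟨rfl, hx, hxy⟩)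
    · exact h
    · exact hdom y hy hyx
    · exact (hdom x hx hxy).symm

theorem eq_of_deleteVerts_eq {T₁ T₂ : G.Subgraph} {v : V} (hv₁ : v ∈ T₁.verts)
    (hv₂ : v ∈ T₂.verts) (hdom₁ : ∀ x ∈ T₁.verts, x ≠ v → T₁.Adj v x)
    (hdom₂ : ∀ x ∈ T₂.verts, x ≠ v → T₂.Adj v x) (h : T₁.deleteVerts {v} = T₂.deleteVerts {v}) :
    T₁ = T₂ := by
  have verts_eq : ∀ T : G.Subgraph, v ∈ T.verts → T.verts = insert v (T.deleteVerts {v}).verts :=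
    fun T hv ↦ by rw [deleteVerts_verts, Set.insert_sdiff_singleton, Set.insert_eq_of_mem hv]
  refine Subgraph.ext (by rw [verts_eq T₁ hv₁, verts_eq T₂ hv₂, h]) ?_
  ext x y
  rw [T₁.adj_iff_of_adj_forall hdom₁, T₂.adj_iff_of_adj_forall hdom₂, h]

def comapTop (T : G.Subgraph) (f : W → V) : (⊤ : SimpleGraph W).Subgraph where
  verts := f ⁻¹' T.verts
  Adj a b := T.Adj (f a) (f b)
  adj_sub h := ne_of_apply_ne f h.ne
  edge_vert h := T.edge_vert h
  symm := ⟨fun _ _ h ↦ h.symm⟩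

@[simp]
theorem comapTop_verts (T : G.Subgraph) (f : W → V) : (T.comapTop f).verts = f ⁻¹' T.verts := rfl

@[simp]
theorem comapTop_adj (T : G.Subgraph) (f : W → V) {a b : W} :
    (T.comapTop f).Adj a b ↔ T.Adj (f a) (f b) := Iff.rfl

theorem adj_iff_exists_comapTop_adj (T : G.Subgraph) {f : W → V}
    (hf : T.verts ⊆ Set.range f) {x y : V} :
    T.Adj x y ↔ ∃ a b, f a = x ∧ f b = y ∧ (T.comapTop f).Adj a b := by
  constructor
  · intro h
    obtain ⟨a, rfl⟩ := hf (T.edge_vert h)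
    obtain ⟨b, rfl⟩ := hf (T.edge_vert h.symm)
    exact ⟨a, b, rfl, rfl, (comapTop_adj T f).2 h⟩
  · rintro ⟨a, b, rfl, rfl, h⟩
    exact (comapTop_adj T f).1 h

theorem comapTop_injOn {T₁ T₂ : G.Subgraph} {f : W → V} (hf₁ : T₁.verts ⊆ Set.range f)
    (hf₂ : T₂.verts ⊆ Set.range f) (h : T₁.comapTop f = T₂.comapTop f) : T₁ = T₂ := by
  refine Subgraph.ext ((Set.preimage_eq_preimage' hf₁ hf₂).1 (by simpa using congrArg verts h)) ?_
  ext x y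
  rw [T₁.adj_iff_exists_comapTop_adj hf₁, T₂.adj_iff_exists_comapTop_adj hf₂, h]

noncomputable def comapTopIso (T : G.Subgraph) {f : W → V} (hinj : Function.Injective f)
    (hf : T.verts ⊆ Set.range f) : (T.comapTop f).coe ≃g T.coe where
  toEquiv := Equiv.ofBijective (fun a ↦ ⟨f a, by simpa using a.2⟩)
    ⟨fun _ _ h ↦ Subtype.ext (hinj (congrArg Subtype.val h)), fun x ↦
      let ⟨a, ha⟩ := hf x.2
      ⟨⟨a, by simp [ha]⟩, Subtype.ext ha⟩⟩
  map_rel_iff' := (comapTop_adj T f).symm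

end SimpleGraph.Subgraph

section Counting

variable {V β : Type*} {G : SimpleGraph V} (K : SimpleGraph β)

theorem card_subgraph_verts_eq_le_copyCount {m : ℕ} (s : Finset V) (hs : s.card = m) :
    Nat.card {T : G.Subgraph // T.verts = s ∧ Nonempty (T.coe ≃g K)} ≤
      copyCount K (⊤ : SimpleGraph (Fin m)) := by
  let f : Fin m → V := fun i ↦ (s.equivFinOfCardEq hs).symm i
  have hinj : Function.Injective f := Subtype.val_injective.comp (Equiv.injective _)
  have hrange : ∀ T : {T : G.Subgraph // T.verts = s ∧ Nonempty (T.coe ≃g K)},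
      T.1.verts ⊆ Set.range f := by
    intro T x hx
    have hxs : x ∈ s := by rwa [T.2.1] at hx
    exact ⟨s.equivFinOfCardEq hs ⟨x, hxs⟩, by simp [f]⟩
  refine Nat.card_le_card_of_injective
    (fun T ↦ ⟨T.1.comapTop f, ⟨(T.1.comapTopIso hinj (hrange T)).trans T.2.2.some⟩⟩) ?_
  intro T₁ T₂ h
  exact Subtype.ext (SimpleGraph.Subgraph.comapTop_injOn (hrange T₁) (hrange T₂)
    (congrArg Subtype.val h))

theorem card_subgraph_verts_subset_le_choose_mul_copyCount [Fintype V] {m : ℕ}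
    (hm : Nat.card β = m) (S : Finset V) :
    Nat.card {T : G.Subgraph // T.verts ⊆ S ∧ Nonempty (T.coe ≃g K)} ≤
      S.card.choose m * copyCount K (⊤ : SimpleGraph (Fin m)) := by
  classical
  let Fibres := Σ s : S.powersetCard m, {T : G.Subgraph // T.verts = s.1 ∧ Nonempty (T.coe ≃g K)}
  have hcard : ∀ T : {T : G.Subgraph // T.verts ⊆ S ∧ Nonempty (T.coe ≃g K)},
      T.1.verts.toFinset ∈ S.powersetCard m := by
    rintro ⟨T, hTS, ⟨e⟩⟩
    rw [Finset.mem_powersetCard, ← hm, ← Set.ncard_eq_toFinset_card', ← Nat.card_coe_set_eq,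
      Nat.card_congr e.toEquiv]
    exact ⟨fun x hx ↦ hTS (Set.mem_toFinset.1 hx), rfl⟩
  calc Nat.card {T : G.Subgraph // T.verts ⊆ S ∧ Nonempty (T.coe ≃g K)}
      ≤ Nat.card Fibres :=
        Nat.card_le_card_of_injective (fun T ↦ ⟨⟨_, hcard T⟩, T.1, by simp, T.2.2⟩)
          fun T₁ T₂ h ↦ Subtype.ext (congrArg (fun F : Fibres ↦ F.2.1) h)
    _ = ∑ s : S.powersetCard m,
          Nat.card {T : G.Subgraph // T.verts = s.1 ∧ Nonempty (T.coe ≃g K)} := Nat.card_sigma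
    _ ≤ ∑ _s : S.powersetCard m, copyCount K (⊤ : SimpleGraph (Fin m)) :=
        Finset.sum_le_sum fun s _ ↦ card_subgraph_verts_eq_le_copyCount K s.1
          (Finset.mem_powersetCard.1 s.2).2
    _ = S.card.choose m * copyCount K (⊤ : SimpleGraph (Fin m)) := by
        simp [Finset.card_powersetCard]

end Counting

section Copies

variable {V W : Type*} {G : SimpleGraph V} {H : SimpleGraph W}

/-- The vertex playing the role of `w` in a copy of `H`, along its chosen isomorphism. -/
noncomputable def copyVertex (T : {T : G.Subgraph // Nonempty (T.coe ≃g H)}) (w : W) : V :=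
  T.2.some.symm w

theorem copyVertex_mem (T : {T : G.Subgraph // Nonempty (T.coe ≃g H)}) (w : W) :
    copyVertex T w ∈ T.1.verts :=
  (T.2.some.symm w).2

theorem copyVertex_injective (T : {T : G.Subgraph // Nonempty (T.coe ≃g H)}) :
    Function.Injective (copyVertex T) :=
  Subtype.val_injective.comp T.2.some.symm.injective

theorem adj_copyVertex (T : {T : G.Subgraph // Nonempty (T.coe ≃g H)}) {w : W}
    (hw : IsDomVert H w) : ∀ x ∈ T.1.verts, x ≠ copyVertex T w → T.1.Adj (copyVertex T w) x :=
  fun x hx hne ↦ IsDomVert.of_iso T.2.some (by simpa using hw) ⟨x, hx⟩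
    (by simpa [Subtype.ext_iff, copyVertex] using hne)

theorem nonempty_deleteVerts_copyVertex_iso (T : {T : G.Subgraph // Nonempty (T.coe ≃g H)})
    {w v₀ : W} (hw : IsDomVert H w) (hv₀ : IsDomVert H v₀) :
    Nonempty ((T.1.deleteVerts {copyVertex T w}).coe ≃g H.induce {v₀}ᶜ) :=
  T.1.nonempty_deleteVerts_iso (copyVertex_mem T w) T.2.some (by simpa [copyVertex] using hw) hv₀

theorem card_isDomVert_mul_copyCount_le [Fintype V] [DecidableRel G.Adj] {v₀ : W}
    (hv₀ : IsDomVert H v₀) :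
    Nat.card {w // IsDomVert H w} * copyCount H G ≤
      ∑ v : V, Nat.card {T : G.Subgraph //
        T.verts ⊆ G.neighborFinset v ∧ Nonempty (T.coe ≃g H.induce {v₀}ᶜ)} := by
  rw [copyCount, ← Nat.card_prod, ← Nat.card_sigma]
  refine Nat.card_le_card_of_injective (fun p ↦ ⟨copyVertex p.2 p.1, p.2.1.deleteVerts {_},
    fun x hx ↦ ?_, nonempty_deleteVerts_copyVertex_iso p.2 p.1.2 hv₀⟩) ?_
  · rw [SimpleGraph.Subgraph.deleteVerts_verts] at hx
    exact (G.mem_neighborFinset _ _).2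
      (p.2.1.adj_sub (adj_copyVertex p.2 p.1.2 x hx.1 hx.2))
  rintro ⟨⟨w₁, hw₁⟩, T₁⟩ ⟨⟨w₂, hw₂⟩, T₂⟩ h
  have hv : copyVertex T₁ w₁ = copyVertex T₂ w₂ := congrArg Sigma.fst h
  have hdel : T₁.1.deleteVerts {copyVertex T₁ w₁} = T₂.1.deleteVerts {copyVertex T₂ w₂} :=
    congrArg (fun x ↦ x.2.1) h
  have hT : T₁ = T₂ := Subtype.ext <| SimpleGraph.Subgraph.eq_of_deleteVerts_eq
    (hv ▸ copyVertex_mem T₁ w₁) (copyVertex_mem T₂ w₂) (hv ▸ adj_copyVertex T₁ hw₁)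
    (adj_copyVertex T₂ hw₂) (hv ▸ hdel)
  subst hT
  simpa using copyVertex_injective T₁ hv

end Copies

theorem stmt_17_general {α V : Type*} [Fintype α] [Fintype V]
    (H : SimpleGraph α) (G : SimpleGraph V)
    (t r n : ℕ) (hcard : Fintype.card α = t) (hn : Fintype.card V = n)
    (v₀ : α) (hv₀ : IsDomVert H v₀)
    -- `G` is `S_r`-free, where `S_r` is the star with `r` leaves.
    (hfree : ∀ S : G.Subgraph,
      IsEmpty (S.coe ≃g completeBipartiteGraph (Fin 1) (Fin r))) :
    Nat.card {v : α // IsDomVert H v} * copyCount H G ≤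
      n * (r - 1).choose (t - 1) *
        copyCount (H.induce ({v₀}ᶜ : Set α)) (⊤ : SimpleGraph (Fin (t - 1))) := by
  classical
  have hK : Nat.card ({v₀}ᶜ : Set α) = t - 1 := by
    rw [Nat.card_coe_set_eq, Set.ncard_compl, Set.ncard_singleton, Nat.card_eq_fintype_card,
      hcard]
  calc Nat.card {v : α // IsDomVert H v} * copyCount H G
      ≤ ∑ v : V, Nat.card {T : G.Subgraph //
          T.verts ⊆ G.neighborFinset v ∧ Nonempty (T.coe ≃g H.induce {v₀}ᶜ)} :=
        card_isDomVert_mul_copyCount_le hv₀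
    _ ≤ ∑ v : V, (G.degree v).choose (t - 1) *
          copyCount (H.induce ({v₀}ᶜ : Set α)) (⊤ : SimpleGraph (Fin (t - 1))) :=
        Finset.sum_le_sum fun v _ ↦ card_subgraph_verts_subset_le_choose_mul_copyCount _ hK _
    _ ≤ ∑ _v : V, (r - 1).choose (t - 1) *
          copyCount (H.induce ({v₀}ᶜ : Set α)) (⊤ : SimpleGraph (Fin (t - 1))) := by
        gcongr with v
        exact Nat.le_sub_one_of_lt (G.degree_lt_of_isEmpty_iso_star hfree v)
    _ = n * (r - 1).choose (t - 1) *
          copyCount (H.induce ({v₀}ᶜ : Set α)) (⊤ : SimpleGraph (Fin (t - 1))) := by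
        rw [Finset.sum_const, Finset.card_univ, hn, smul_eq_mul, mul_assoc]

theorem stmt_17 {α V : Type*} [Fintype α] [DecidableEq α] [Fintype V] [DecidableEq V]
    (H : SimpleGraph α) (G : SimpleGraph V)
    (t r n : ℕ) (hcard : Fintype.card α = t) (hr : 1 ≤ r) (hn : Fintype.card V = n)
    (v₀ : α) (hv₀ : IsDomVert H v₀)
    -- `G` is `S_r`-free, where `S_r` is the star with `r` leaves.
    (hfree : ∀ S : G.Subgraph,
      IsEmpty (S.coe ≃g completeBipartiteGraph (Fin 1) (Fin r))) :
    Nat.card {v : α // IsDomVert H v} * copyCount H G ≤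
      n * (r - 1).choose (t - 1) *
        copyCount (H.induce ({v₀}ᶜ : Set α)) (⊤ : SimpleGraph (Fin (t - 1))) :=
  stmt_17_general H G t r n hcard hn v₀ hv₀ hfree
end
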